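/- arXiv:2106.10769 — 3 statements merged into one kernel-verified Lean document; each statement's English description precedes it below -/
import Mathlib

section
/- Work in the bigraded setting of the ℝ-motivic May spectral sequence E₁-page 𝔽₂[τ][h_{i,j} : i ≥ 1, j ≥ 0]/(h_{1,0}, h_{1,1}, h_{2,0}), where the (stem, filtration, weight) tridegree of h_{i,0} is (2^i − 2, 1, 2^{i−1} − 1) and of h_{i,j} for j ≥ 1 is (2^j(2^i − 1) − 1, 1, 2^{j−1}(2^i − 1)), and τ has degree (0, 0, −1). Then for every (s, w) in the set D = {(0,0), (1,0), (2,1), (3,1), (4,1), (5,2), (6,2)}, every i ≥ 0, and every f ≥ 3, the homogeneous component of tridegree (s − 2 + i, f, w + i) of this ring is zero. -/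
/-- Stem of the May generator `h_{i,j}` (for `i ≥ 1`): `2^i − 2` if `j = 0`,
and `2^j(2^i − 1) − 1` if `j ≥ 1`. -/
def hStem (p : ℕ × ℕ) : ℤ :=
  if p.2 = 0 then 2 ^ p.1 - 2 else 2 ^ p.2 * (2 ^ p.1 - 1) - 1

/-- Weight of the May generator `h_{i,j}` (for `i ≥ 1`): `2^{i−1} − 1` if `j = 0`,
and `2^{j−1}(2^i − 1)` if `j ≥ 1`. -/
def hWt (p : ℕ × ℕ) : ℤ :=
  if p.2 = 0 then 2 ^ (p.1 - 1) - 1 else 2 ^ (p.2 - 1) * (2 ^ p.1 - 1)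

lemma hKey (p : ℕ × ℕ) (h1 : 1 ≤ p.1) (h2 : p ≠ (1, 0)) (h3 : p ≠ (1, 1))
    (h4 : p ≠ (2, 0)) : 3 ≤ hStem p ∧ 2 * hWt p ≤ hStem p + 1 := by
  obtain ⟨i, j⟩ := p
  have h2 : ¬(i = 1 ∧ j = 0) := by rintro ⟨rfl, rfl⟩; exact h2 rfl
  have h3 : ¬(i = 1 ∧ j = 1) := by rintro ⟨rfl, rfl⟩; exact h3 rfl
  have h4 : ¬(i = 2 ∧ j = 0) := by rintro ⟨rfl, rfl⟩; exact h4 rfl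
  rcases Nat.eq_zero_or_pos j with hj | hj
  · subst hj
    have hi : 3 ≤ i := by omega
    simp only [hStem, hWt, if_pos rfl, if_true]
    have h2i : (2:ℤ) * 2 ^ (i - 1) = 2 ^ i := by
      rw [← pow_succ']
      congr 1; omega
    have : (8:ℤ) ≤ 2 ^ i := by
      calc (8:ℤ) = 2 ^ 3 := by norm_num
      _ ≤ 2 ^ i := by exact pow_le_pow_right₀ (by norm_num) hi
    constructor <;> linarith
  · have hjne : j ≠ 0 := by omega
    simp only [hStem, hWt, if_neg hjne]
    have h2j : (2:ℤ) * 2 ^ (j - 1) = 2 ^ j := by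
      rw [← pow_succ']
      congr 1; omega
    rcases Nat.lt_or_ge i 2 with hi | hi
    · have : i = 1 := by omega
      subst this
      have hj2 : 2 ≤ j := by omega
      have : (4:ℤ) ≤ 2 ^ j := by
        calc (4:ℤ) = 2 ^ 2 := by norm_num
        _ ≤ 2 ^ j := pow_le_pow_right₀ (by norm_num) hj2
      norm_num
      constructor <;> linarith
    · have h2i : (4:ℤ) ≤ 2 ^ i := by
        calc (4:ℤ) = 2 ^ 2 := by norm_num
        _ ≤ 2 ^ i := pow_le_pow_right₀ (by norm_num) hi
      have h2j' : (2:ℤ) ≤ 2 ^ j := by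
        calc (2:ℤ) = 2 ^ 1 := by norm_num
        _ ≤ 2 ^ j := pow_le_pow_right₀ (by norm_num) hj
      have : (2:ℤ) * (2 ^ i - 1) ≤ 2 ^ j * (2 ^ i - 1) := by
        apply mul_le_mul_of_nonneg_right h2j' (by omega)
      constructor <;> nlinarith

/-- In the May `E₁`-page `𝔽₂[τ][h_{i,j} : i ≥ 1, j ≥ 0]/(h_{1,0}, h_{1,1}, h_{2,0})`
(τ of tridegree `(0,0,−1)`, `h_{i,j}` of filtration 1 and (stem, weight) as above),
for every `(s,w)` in `D = {(0,0),(1,0),(2,1),(3,1),(4,1),(5,2),(6,2)}`, every `i ≥ 0`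
and every `f ≥ 3`, the homogeneous component of tridegree `(s−2+i, f, w+i)` is zero:
there is no monomial `τ^a · Π h_{i_k,j_k}` (avoiding the killed generators) of that
tridegree. -/
theorem may_E1_vanishing_A1 :
    ∀ s w : ℤ,
      (s, w) ∈ ([(0,0), (1,0), (2,1), (3,1), (4,1), (5,2), (6,2)] : List (ℤ × ℤ)) →
      ∀ (i f : ℕ), 3 ≤ f →
        ¬ ∃ (a : ℕ) (m : (ℕ × ℕ) →₀ ℕ),
            (∀ p ∈ m.support, 1 ≤ p.1 ∧ p ≠ (1, 0) ∧ p ≠ (1, 1) ∧ p ≠ (2, 0)) ∧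
            (m.sum fun _ e => e) = f ∧
            (m.sum fun p e => (e : ℤ) * hStem p) = s - 2 + i ∧
            (m.sum fun p e => (e : ℤ) * hWt p) - a = w + i := by
  rintro s w hsw i f hf ⟨a, m, hsupp, hfeq, hseq, hweq⟩
  -- cast the filtration equation to ℤ
  have hfz : (m.support.sum fun p => ((m p : ℤ))) = (f : ℤ) := by
    rw [← hfeq]
    simp [Finsupp.sum]
  simp only [Finsupp.sum] at hseq hweq
  -- stem lower bound
  have hS : 3 * (f : ℤ) ≤ m.support.sum fun p => (m p : ℤ) * hStem p := by
    rw [← hfz, Finset.mul_sum]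
    apply Finset.sum_le_sum
    intro p hp
    obtain ⟨h1, h2, h3, h4⟩ := hsupp p hp
    have := (hKey p h1 h2 h3 h4).1
    nlinarith [Int.natCast_nonneg (m p)]
  -- weight upper bound
  have hW : 2 * (m.support.sum fun p => (m p : ℤ) * hWt p) ≤
      (m.support.sum fun p => (m p : ℤ) * hStem p) +
      (m.support.sum fun p => ((m p : ℤ))) := by
    rw [Finset.mul_sum, ← Finset.sum_add_distrib]
    apply Finset.sum_le_sum
    intro p hp
    obtain ⟨h1, h2, h3, h4⟩ := hsupp p hp
    have := (hKey p h1 h2 h3 h4).2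
    nlinarith [Int.natCast_nonneg (m p)]
  rw [hfz] at hW
  have ha : (0:ℤ) ≤ a := Int.natCast_nonneg a
  simp only [List.mem_cons, List.mem_singleton, Prod.mk.injEq] at hsw
  rcases hsw with ⟨hs, hw⟩ | ⟨hs, hw⟩ | ⟨hs, hw⟩ | ⟨hs, hw⟩ | ⟨hs, hw⟩ | ⟨hs, hw⟩ | ⟨hs, hw⟩ | h
  all_goals first
    | (subst hs; subst hw; omega)
    | simp at h
end

section
/- In the polynomial ring 𝔽₂[τ][h_{i,j} : i ≥ 1, j ≥ 0]/(h_{1,0}, h_{1,1}) with tridegrees as in the motivic May spectral sequence (h_{i,0} in degree (2^i−2, 1, 2^{i−1}−1), h_{i,j} for j ≥ 1 in degree (2^j(2^i−1)−1, 1, 2^{j−1}(2^i−1)), τ in degree (0,0,−1)), for every (s,w) ∈ {(0,0),(1,0),(2,1),(3,1)}, every i ≥ 0, and every f ≥ 2, the homogeneous component of tridegree (s − 1 + i, f, w + i) is zero. -/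
/-- Every allowed May generator has stem at least one more than its weight. -/
lemma hWt_add_one_le_hStem (p : ℕ × ℕ) (h1 : 1 ≤ p.1) (h2 : p ≠ (1, 0))
    (h3 : p ≠ (1, 1)) : hWt p + 1 ≤ hStem p := by
  obtain ⟨x, y⟩ := p
  rcases Nat.eq_zero_or_pos y with hy | hy
  · subst hy
    have hx1 : x ≠ 1 := fun h => h2 (by simp [h])
    obtain ⟨k, rfl⟩ : ∃ k, x = k + 2 := ⟨x - 2, by omega⟩
    simp only [hWt, hStem, if_pos rfl, if_true, show k + 2 - 1 = k + 1 from rfl]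
    have hp : (2:ℤ) ^ 1 ≤ 2 ^ (k + 1) := pow_le_pow_right₀ one_le_two (by omega)
    have he : (2:ℤ) ^ (k + 2) = 2 * 2 ^ (k + 1) := by ring
    simp only [pow_one] at hp
    linarith
  · have hy0 : y ≠ 0 := hy.ne'
    obtain ⟨j, rfl⟩ : ∃ j, y = j + 1 := ⟨y - 1, by omega⟩
    simp only [hWt, hStem, if_neg hy0, Nat.add_sub_cancel]
    have h2x : (2:ℤ) ≤ 2 ^ j * (2 ^ x - 1) := by
      by_cases hx1 : x = 1
      · subst hx1
        have hj : 1 ≤ j := by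
          rcases Nat.eq_zero_or_pos j with hj0 | hj0
          · exact absurd (by simp [hj0]) h3
          · exact hj0
        have hp : (2:ℤ) ^ 1 ≤ 2 ^ j := pow_le_pow_right₀ one_le_two hj
        simp at hp ⊢
        linarith
      · have hx2 : 2 ≤ x := by omega
        have hp : (2:ℤ) ^ 2 ≤ 2 ^ x := pow_le_pow_right₀ one_le_two hx2
        have hq : (1:ℤ) ≤ 2 ^ j := one_le_pow₀ one_le_two
        nlinarith
    have he : (2:ℤ) ^ (j + 1) * (2 ^ x - 1) = 2 * (2 ^ j * (2 ^ x - 1)) := by ring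
    linarith

/-- In `𝔽₂[τ][h_{i,j} : i ≥ 1, j ≥ 0]/(h_{1,0}, h_{1,1})` with the May tridegrees,
for every `(s,w) ∈ {(0,0),(1,0),(2,1),(3,1)}`, every `i ≥ 0` and every `f ≥ 2`, the
homogeneous component of tridegree `(s−1+i, f, w+i)` is zero: there is no monomial
`τ^a · Π h_{i_k,j_k}` (with `h_{1,0}, h_{1,1}` killed) of that tridegree. -/
theorem may_E1_vanishing_B1 :
    ∀ s w : ℤ,
      (s, w) ∈ ([(0,0), (1,0), (2,1), (3,1)] : List (ℤ × ℤ)) →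
      ∀ (i f : ℕ), 2 ≤ f →
        ¬ ∃ (a : ℕ) (m : (ℕ × ℕ) →₀ ℕ),
            (∀ p ∈ m.support, 1 ≤ p.1 ∧ p ≠ (1, 0) ∧ p ≠ (1, 1)) ∧
            (m.sum fun _ e => e) = f ∧
            (m.sum fun p e => (e : ℤ) * hStem p) = s - 1 + i ∧
            (m.sum fun p e => (e : ℤ) * hWt p) - a = w + i := by
  rintro s w hsw i f hf ⟨a, m, hsupp, hF, hS, hW⟩
  have hf' : (m.support.sum fun p => (m p : ℤ)) = (f : ℤ) := by
    rw [← hF, Finsupp.sum]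
    push_cast
    rfl
  have hsum : (m.sum fun p e => (e : ℤ) * hWt p) + f ≤
      m.sum fun p e => (e : ℤ) * hStem p := by
    rw [Finsupp.sum, Finsupp.sum, ← hf', ← Finset.sum_add_distrib]
    refine Finset.sum_le_sum fun p hp => ?_
    obtain ⟨h1, h2, h3⟩ := hsupp p hp
    have hkey := hWt_add_one_le_hStem p h1 h2 h3
    have hm : (0:ℤ) ≤ (m p : ℤ) := Int.natCast_nonneg _
    nlinarith
  have ha : (0:ℤ) ≤ (a : ℤ) := Int.natCast_nonneg _
  have hf2 : (2:ℤ) ≤ (f : ℤ) := by exact_mod_cast hf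
  simp only [List.mem_cons, List.mem_singleton, Prod.mk.injEq, List.not_mem_nil] at hsw
  rcases hsw with ⟨rfl, rfl⟩ | ⟨rfl, rfl⟩ | ⟨rfl, rfl⟩ | ⟨rfl, rfl⟩ | h <;> first | exact h | linarith
end

section
/- Let A(1)_v̄ be the 𝔽₂[τ,ρ]-free module on generators x₀₀, x₁₀, x₂₁, x₃₁, y₃₁, y₄₁, y₅₂, y₆₂ with Sq¹, Sq², Sq⁴ acting as specified by a parameter vector v̄ ∈ 𝔽₂⁷ according to Theorem 'list'. Then the quotient map induced by the submodule generated (over the Sq-operations and 𝕄) by x₃₁ + y₃₁ has the following property: the 𝕄-submodule M spanned by {x₃₁ + y₃₁, Sq¹(x₃₁+y₃₁), Sq²(x₃₁+y₃₁), Sq²Sq¹·(x₃₁+y₃₁)} = span{x₃₁+y₃₁, y₄₁, y₅₂, y₆₂} is free of rank 4 over 𝕄 and is closed under the action of Sq¹ and Sq². -/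
open MvPolynomial

noncomputable section

/-- The coefficient ring `𝕄 = 𝔽₂[τ, ρ]`, with `τ = X 0` and `ρ = X 1`. -/
abbrev MR := MvPolynomial (Fin 2) (ZMod 2)

/-- The free `𝕄`-module underlying `A^ℝ(1)`, with basis indexed by
`0 = x₀₀, 1 = x₁₀, 2 = x₂₁, 3 = x₃₁, 4 = y₃₁, 5 = y₄₁, 6 = y₅₂, 7 = y₆₂`. -/
abbrev A1 := Fin 8 →₀ MR

/-- The `k`-th `𝕄`-basis generator of `A^ℝ(1)`. -/
def gen (k : Fin 8) : A1 := Finsupp.single k 1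

/-- Values of `Sq¹` on the generators: `Sq¹x₀₀ = x₁₀`, `Sq¹x₂₁ = x₃₁`,
`Sq¹y₃₁ = y₄₁`, `Sq¹y₅₂ = y₆₂`, zero otherwise. -/
def img1 : Fin 8 → A1 := ![gen 1, 0, gen 3, 0, gen 5, 0, gen 7, 0]

/-- Values of `Sq²` on the generators: `Sq²x₀₀ = x₂₁`, `Sq²x₁₀ = y₃₁`,
`Sq²x₂₁ = τ·y₄₁`, `Sq²x₃₁ = y₅₂`, `Sq²y₄₁ = y₆₂`, zero otherwise. -/
def img2 : Fin 8 → A1 := ![gen 2, gen 4, (X 0 : MR) • gen 5, gen 6, 0, gen 7, 0, 0]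

/-- `Sq¹` as an `𝕄`-linear endomorphism of `A^ℝ(1)`. -/
def Sq1 : A1 →ₗ[MR] A1 :=
  Finsupp.lsum MR fun k => LinearMap.toSpanSingleton MR A1 (img1 k)

/-- `Sq²` as an `𝕄`-linear endomorphism of `A^ℝ(1)`. -/
def Sq2 : A1 →ₗ[MR] A1 :=
  Finsupp.lsum MR fun k => LinearMap.toSpanSingleton MR A1 (img2 k)

/-! Since `Sq¹x₃₁ = 0` and `Sq²y₃₁ = 0`, the element `x₃₁ + y₃₁` has `Sq¹` equal to `y₄₁`, `Sq²` equal
to `y₅₂` and `Sq²Sq¹` equal to `y₆₂`, so the two spans agree. The four elements are independent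
because their coordinates at `x₃₁, y₄₁, y₅₂, y₆₂` form the identity matrix, and the span is stable
because `Sq¹` and `Sq²` send each of `y₄₁, y₅₂, y₆₂` to `y₆₂` or to `0`. -/

theorem Finsupp.linearIndependent_of_apply_eq_single {R ι κ : Type*} [Semiring R] [DecidableEq ι]
    (v : ι → κ →₀ R) (c : ι → κ) (h : ∀ i j, v i (c j) = (Pi.single i 1 : ι → R) j) :
    LinearIndependent R v := by
  have hcoord :
      (LinearMap.pi fun j => Finsupp.lapply (R := R) (c j)) ∘ v = fun i => Pi.single i 1 := by
    funext i j
    exact h i j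
  exact LinearIndependent.of_comp _ (hcoord ▸ Pi.linearIndependent_single_one ι R)

@[simp] lemma Sq1_gen (k : Fin 8) : Sq1 (gen k) = img1 k := by
  simp [Sq1, gen]

@[simp] lemma Sq2_gen (k : Fin 8) : Sq2 (gen k) = img2 k := by
  simp [Sq2, gen]

lemma Sq1_gen_three_add_gen_four : Sq1 (gen 3 + gen 4) = gen 5 := by
  simp [img1]

lemma Sq2_gen_three_add_gen_four : Sq2 (gen 3 + gen 4) = gen 6 := by
  simp [img2]

lemma Sq2_Sq1_gen_three_add_gen_four : Sq2 (Sq1 (gen 3 + gen 4)) = gen 7 := by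
  simp [Sq1_gen_three_add_gen_four, img2]

lemma linearIndependent_gen_three_add_gen_four_gen_five_six_seven :
    LinearIndependent MR ![gen 3 + gen 4, gen 5, gen 6, gen 7] := by
  refine Finsupp.linearIndependent_of_apply_eq_single _ ![3, 5, 6, 7] fun i j => ?_
  fin_cases i <;> fin_cases j <;> simp [gen]

lemma map_Sq1_span_le :
    (Submodule.span MR {gen 3 + gen 4, gen 5, gen 6, gen 7}).map Sq1
      ≤ Submodule.span MR {gen 3 + gen 4, gen 5, gen 6, gen 7} := by
  rw [Submodule.map_span_le]
  rintro _ (rfl | rfl | rfl | rfl) <;> simp [img1, Submodule.mem_span_of_mem]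

lemma map_Sq2_span_le :
    (Submodule.span MR {gen 3 + gen 4, gen 5, gen 6, gen 7}).map Sq2
      ≤ Submodule.span MR {gen 3 + gen 4, gen 5, gen 6, gen 7} := by
  rw [Submodule.map_span_le]
  rintro _ (rfl | rfl | rfl | rfl) <;> simp [img2, Submodule.mem_span_of_mem]

/-- The `𝕄`-submodule of `A^ℝ(1)` spanned by
`{x₃₁+y₃₁, Sq¹(x₃₁+y₃₁), Sq²(x₃₁+y₃₁), Sq²Sq¹(x₃₁+y₃₁)}` equals the span of
`{x₃₁+y₃₁, y₄₁, y₅₂, y₆₂}`, is free of rank 4 over `𝕄` (the four spanning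
elements are `𝕄`-linearly independent), and is closed under `Sq¹` and `Sq²`. -/
theorem submodule_B_epsilon :
    LinearIndependent MR
        ![gen 3 + gen 4, Sq1 (gen 3 + gen 4), Sq2 (gen 3 + gen 4),
          Sq2 (Sq1 (gen 3 + gen 4))] ∧
      Submodule.span MR
          {gen 3 + gen 4, Sq1 (gen 3 + gen 4), Sq2 (gen 3 + gen 4),
            Sq2 (Sq1 (gen 3 + gen 4))}
        = Submodule.span MR {gen 3 + gen 4, gen 5, gen 6, gen 7} ∧
      (Submodule.span MR {gen 3 + gen 4, gen 5, gen 6, gen 7}).map Sq1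
        ≤ Submodule.span MR {gen 3 + gen 4, gen 5, gen 6, gen 7} ∧
      (Submodule.span MR {gen 3 + gen 4, gen 5, gen 6, gen 7}).map Sq2
        ≤ Submodule.span MR {gen 3 + gen 4, gen 5, gen 6, gen 7} := by
  rw [Sq2_Sq1_gen_three_add_gen_four, Sq1_gen_three_add_gen_four, Sq2_gen_three_add_gen_four]
  exact ⟨linearIndependent_gen_three_add_gen_four_gen_five_six_seven, rfl, map_Sq1_span_le,
    map_Sq2_span_le⟩
end
end
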